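/- There exists N₀ ∈ ℕ, depending only on Q, α and θ, such that for every N ≥ N₀ and every pair (M,B) consisting of a representation M of Q on (V_i) and a family B = (B_i : V_i → E_i)_{i∈Q0⁻}: (M,B) is θ⁻-semi-stable if and only if M is θ-semi-stable and B_i is a linear isomorphism for every i ∈ Q0⁻; and (M,B) is θ⁻-stable if and only if M is θ-stable and B_i is a linear isomorphism for every i ∈ Q0⁻. -/
import Mathlib


open Module

section

variable {k Q0 Q1 : Type} [Field k] (src tgt : Q1 → Q0)
  (V : Q0 → Type) [∀ i, AddCommGroup (V i)] [∀ i, Module k (V i)]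

/-- `U` is a subrepresentation of the representation `M`. -/
def IsSubrep (M : ∀ a : Q1, V (src a) →ₗ[k] V (tgt a))
    (U : ∀ i : Q0, Submodule k (V i)) : Prop :=
  ∀ a : Q1, ∀ x ∈ U (src a), M a x ∈ U (tgt a)

variable [Fintype Q0]

/-- `M` is θ-semi-stable: `θ((V_i)_i) = 0` and `θ(U) ≤ 0` for every
subrepresentation `U`. -/
def ThetaSemistable (θ : Q0 → ℤ) (M : ∀ a : Q1, V (src a) →ₗ[k] V (tgt a)) : Prop :=
  (∑ i : Q0, θ i * (finrank k (V i) : ℤ)) = 0 ∧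
  ∀ U : ∀ i : Q0, Submodule k (V i), IsSubrep src tgt V M U →
    ∑ i : Q0, θ i * (finrank k (U i) : ℤ) ≤ 0

/-- `M` is θ-stable: θ-semi-stable and `θ(U) < 0` for every subrepresentation `U` other
than `0` and `(V_i)_i`. -/
def ThetaStable (θ : Q0 → ℤ) (M : ∀ a : Q1, V (src a) →ₗ[k] V (tgt a)) : Prop :=
  ThetaSemistable src tgt V θ M ∧
  ∀ U : ∀ i : Q0, Submodule k (V i), IsSubrep src tgt V M U →
    (¬ ∀ i, U i = ⊥) → (¬ ∀ i, U i = ⊤) →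
    ∑ i : Q0, θ i * (finrank k (U i) : ℤ) < 0

variable (θ : Q0 → ℤ)
  (E : {i : Q0 // θ i ≤ 0} → Type) [∀ i, AddCommGroup (E i)] [∀ i, Module k (E i)]

/-- The θ⁻-value of a framed subrepresentation `(U,W)` for the framing parameter `N`. -/
noncomputable def ThetaMinusVal (N : ℕ) (U : ∀ i : Q0, Submodule k (V i))
    (W : ∀ i : {i : Q0 // θ i ≤ 0}, Submodule k (E i)) : ℤ :=
  (∑ i : {i : Q0 // θ i ≤ 0},
      ((θ i.1 + (N : ℤ)) * (finrank k (U i.1) : ℤ) - (N : ℤ) * (finrank k (W i) : ℤ)))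
    + ∑ i : {i : Q0 // ¬ θ i ≤ 0}, θ i.1 * (finrank k (U i.1) : ℤ)

/-- `(M,B)` is θ⁻-semi-stable: every framed subrepresentation `(U,W)` (so `B_i(U_i) ⊆ W_i`
for `i ∈ Q0⁻`) has θ⁻-value `≤ 0`. -/
def ThetaMinusSemistable (N : ℕ) (M : ∀ a : Q1, V (src a) →ₗ[k] V (tgt a))
    (B : ∀ i : {i : Q0 // θ i ≤ 0}, V i.1 →ₗ[k] E i) : Prop :=
  ∀ (U : ∀ i : Q0, Submodule k (V i)) (W : ∀ i : {i : Q0 // θ i ≤ 0}, Submodule k (E i)),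
    IsSubrep src tgt V M U →
    (∀ i : {i : Q0 // θ i ≤ 0}, ∀ x ∈ U i.1, B i x ∈ W i) →
    ThetaMinusVal V θ E N U W ≤ 0

/-- `(M,B)` is θ⁻-stable: every framed subrepresentation other than `(0,0)` and
`((V_i)_i,(E_i)_i)` has θ⁻-value `< 0`. -/
def ThetaMinusStable (N : ℕ) (M : ∀ a : Q1, V (src a) →ₗ[k] V (tgt a))
    (B : ∀ i : {i : Q0 // θ i ≤ 0}, V i.1 →ₗ[k] E i) : Prop :=
  ∀ (U : ∀ i : Q0, Submodule k (V i)) (W : ∀ i : {i : Q0 // θ i ≤ 0}, Submodule k (E i)),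
    IsSubrep src tgt V M U →
    (∀ i : {i : Q0 // θ i ≤ 0}, ∀ x ∈ U i.1, B i x ∈ W i) →
    ¬((∀ i, U i = ⊥) ∧ (∀ i, W i = ⊥)) →
    ¬((∀ i, U i = ⊤) ∧ (∀ i, W i = ⊤)) →
    ThetaMinusVal V θ E N U W < 0

end


section Aux
variable {k Q0 Q1 : Type} [Field k] [Fintype Q0]
  (V : Q0 → Type) [∀ i, AddCommGroup (V i)] [∀ i, Module k (V i)]
  (θ : Q0 → ℤ)
  (E : {i : Q0 // θ i ≤ 0} → Type) [∀ i, AddCommGroup (E i)] [∀ i, Module k (E i)]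

theorem thetaMinusVal_eq (N : ℕ) (U : ∀ i : Q0, Submodule k (V i))
    (W : ∀ i : {i : Q0 // θ i ≤ 0}, Submodule k (E i)) :
    ThetaMinusVal V θ E N U W =
      (∑ i : Q0, θ i * (finrank k (U i) : ℤ)) +
      (N : ℤ) * ∑ i : {i : Q0 // θ i ≤ 0},
        ((finrank k (U i.1) : ℤ) - (finrank k (W i) : ℤ)) := by
  rw [ThetaMinusVal,
    ← Fintype.sum_subtype_add_sum_subtype (fun i => θ i ≤ 0)
      (fun i => θ i * (finrank k (U i) : ℤ)), Finset.mul_sum]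
  rw [show (∑ i : {i : Q0 // θ i ≤ 0},
      ((θ i.1 + (N : ℤ)) * (finrank k (U i.1) : ℤ) - (N : ℤ) * (finrank k (W i) : ℤ)))
    = ∑ i : {i : Q0 // θ i ≤ 0}, (θ i.1 * (finrank k (U i.1) : ℤ)
        + (N : ℤ) * ((finrank k (U i.1) : ℤ) - (finrank k (W i) : ℤ))) from
    Finset.sum_congr rfl fun i _ => by ring, Finset.sum_add_distrib]
  ring

theorem theta_sum_le [∀ i, FiniteDimensional k (V i)] (U : ∀ i : Q0, Submodule k (V i)) :
    ∑ i : Q0, θ i * (finrank k (U i) : ℤ) ≤ ∑ i : Q0, |θ i| * (finrank k (V i) : ℤ) := by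
  refine Finset.sum_le_sum fun i _ => ?_
  calc θ i * (finrank k (U i) : ℤ) ≤ |θ i| * (finrank k (U i) : ℤ) :=
        mul_le_mul_of_nonneg_right (le_abs_self _) (by positivity)
    _ ≤ |θ i| * (finrank k (V i) : ℤ) :=
        mul_le_mul_of_nonneg_left
          (by exact_mod_cast Submodule.finrank_le (U i)) (abs_nonneg _)

end Aux

/-- For `N ≫ 0`: `(M,B)` is θ⁻-(semi-)stable if and only if `M` is θ-(semi-)stable and
all `B_i`, `i ∈ Q0⁻`, are isomorphisms. -/
theorem statement9 {k Q0 Q1 : Type} [Field k] [Fintype Q0] [Fintype Q1]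
    (src tgt : Q1 → Q0)
    (V : Q0 → Type) [∀ i, AddCommGroup (V i)] [∀ i, Module k (V i)]
    [∀ i, FiniteDimensional k (V i)]
    (θ : Q0 → ℤ)
    (hθ : ∑ i : Q0, θ i * (finrank k (V i) : ℤ) = 0)
    (E : {i : Q0 // θ i ≤ 0} → Type) [∀ i, AddCommGroup (E i)] [∀ i, Module k (E i)]
    [∀ i, FiniteDimensional k (E i)]
    (hE : ∀ i : {i : Q0 // θ i ≤ 0}, finrank k (E i) = finrank k (V i.1)) :
    ∃ N₀ : ℕ, ∀ N : ℕ, N₀ ≤ N →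
      ∀ (M : ∀ a : Q1, V (src a) →ₗ[k] V (tgt a))
        (B : ∀ i : {i : Q0 // θ i ≤ 0}, V i.1 →ₗ[k] E i),
        (ThetaMinusSemistable src tgt V θ E N M B ↔
          (ThetaSemistable src tgt V θ M ∧ ∀ i, Function.Bijective (B i))) ∧
        (ThetaMinusStable src tgt V θ E N M B ↔
          (ThetaStable src tgt V θ M ∧ ∀ i, Function.Bijective (B i))) := by
  classical
  set C : ℤ := ∑ i : Q0, |θ i| * (finrank k (V i) : ℤ) with hCdef
  have hC0 : 0 ≤ C := Finset.sum_nonneg fun i _ => by positivity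
  refine ⟨C.toNat + 1, fun N hN M B => ?_⟩
  have hNC : C < (N : ℤ) := by
    calc C ≤ (C.toNat : ℤ) := Int.self_le_toNat C
      _ < (N : ℤ) := by exact_mod_cast Nat.lt_of_lt_of_le (Nat.lt_succ_self _) hN
  have hN0 : (0:ℤ) ≤ (N:ℤ) := Int.natCast_nonneg N
  have hN1 : (1:ℤ) ≤ (N:ℤ) := by omega
  -- dimension of image under injective map
  have hmapdim : ∀ (hB : ∀ i, Function.Injective (B i)) (U : ∀ i, Submodule k (V i))
      (i : {i : Q0 // θ i ≤ 0}), finrank k ((U i.1).map (B i)) = finrank k (U i.1) :=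
    fun hB U i => (((U i.1).equivMapOfInjective (B i) (hB i)).finrank_eq).symm
  -- semistability implies all B i bijective
  have bij_of_mss : ThetaMinusSemistable src tgt V θ E N M B →
      ∀ i, Function.Bijective (B i) := by
    intro hss
    have hsurj : ∀ j, Function.Surjective (B j) := by
      by_contra hns
      push_neg at hns
      obtain ⟨j, hj⟩ := hns
      have hval := hss (fun _ => ⊤) (fun i => LinearMap.range (B i))
        (fun a x _ => Submodule.mem_top)
        (fun i x _ => LinearMap.mem_range_self _ x)
      rw [thetaMinusVal_eq] at hval
      have h1 : ∑ i : Q0, θ i * (finrank k (⊤ : Submodule k (V i)) : ℤ) = 0 := by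
        simpa [finrank_top] using hθ
      have hterm : ∀ i : {i : Q0 // θ i ≤ 0},
          (0:ℤ) ≤ (finrank k (⊤ : Submodule k (V i.1)) : ℤ)
            - (finrank k (LinearMap.range (B i)) : ℤ) := by
        intro i
        have h2 := Submodule.finrank_le (LinearMap.range (B i))
        rw [hE i] at h2
        rw [finrank_top]
        exact sub_nonneg.mpr (by exact_mod_cast h2)
      have hjterm : (1:ℤ) ≤ (finrank k (⊤ : Submodule k (V j.1)) : ℤ)
            - (finrank k (LinearMap.range (B j)) : ℤ) := by
        have hlt : finrank k (LinearMap.range (B j)) < finrank k (E j) := by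
          rcases lt_or_eq_of_le (Submodule.finrank_le (LinearMap.range (B j))) with h | h
          · exact h
          · exact absurd (LinearMap.range_eq_top.mp (Submodule.eq_top_of_finrank_eq h)) hj
        rw [finrank_top, ← hE j]
        omega
      have h2 : (1:ℤ) ≤ ∑ i : {i : Q0 // θ i ≤ 0},
          ((finrank k (⊤ : Submodule k (V i.1)) : ℤ)
            - (finrank k (LinearMap.range (B i)) : ℤ)) :=
        le_trans hjterm (Finset.single_le_sum (fun i _ => hterm i) (Finset.mem_univ j))
      nlinarith
    intro i
    exact ⟨(LinearMap.injective_iff_surjective_of_finrank_eq_finrank (hE i).symm).mpr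
      (hsurj i), hsurj i⟩
  -- θ⁻-semistable implies M θ-semistable
  have mss : ThetaMinusSemistable src tgt V θ E N M B → ThetaSemistable src tgt V θ M := by
    intro hss
    have hbij := bij_of_mss hss
    refine ⟨hθ, fun U hU => ?_⟩
    have hval := hss U (fun i => (U i.1).map (B i)) hU
      (fun i x hx => Submodule.mem_map_of_mem hx)
    rw [thetaMinusVal_eq] at hval
    rw [Finset.sum_eq_zero (fun (i : {i : Q0 // θ i ≤ 0}) _ => by
      rw [hmapdim (fun j => (hbij j).1) U i]; ring)] at hval
    simpa using hval
  -- converse for semistability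
  have ss_back : ThetaSemistable src tgt V θ M → (∀ i, Function.Bijective (B i)) →
      ThetaMinusSemistable src tgt V θ E N M B := by
    intro hM hB U W hU hW
    rw [thetaMinusVal_eq]
    have hS : ∀ i : {i : Q0 // θ i ≤ 0},
        ((finrank k (U i.1) : ℤ) - (finrank k (W i) : ℤ)) ≤ 0 := by
      intro i
      have hle : (U i.1).map (B i) ≤ W i :=
        Submodule.map_le_iff_le_comap.mpr (fun x hx => hW i x hx)
      have h2 := Submodule.finrank_mono hle
      rw [hmapdim (fun j => (hB j).1) U i] at h2
      exact sub_nonpos.mpr (by exact_mod_cast h2)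
    have h1 := hM.2 U hU
    have h2 : (∑ i : {i : Q0 // θ i ≤ 0},
        ((finrank k (U i.1) : ℤ) - (finrank k (W i) : ℤ))) ≤ 0 :=
      Finset.sum_nonpos fun i _ => hS i
    nlinarith
  -- θ⁻-stable implies θ⁻-semistable
  have stable_to_ss : ThetaMinusStable src tgt V θ E N M B →
      ThetaMinusSemistable src tgt V θ E N M B := by
    intro h U W hU hW
    by_cases h0 : (∀ i, U i = ⊥) ∧ (∀ i, W i = ⊥)
    · rw [thetaMinusVal_eq]
      have e1 : ∀ i : Q0, finrank k (U i) = 0 := fun i => by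
        rw [h0.1 i]; exact finrank_bot k (V i)
      have e2 : ∀ i : {i : Q0 // θ i ≤ 0}, finrank k (W i) = 0 := fun i => by
        rw [h0.2 i]; exact finrank_bot k (E i)
      simp [e1, e2]
    by_cases hT : (∀ i, U i = ⊤) ∧ (∀ i, W i = ⊤)
    · rw [thetaMinusVal_eq]
      have e1 : ∀ i : Q0, finrank k (U i) = finrank k (V i) := fun i => by
        rw [hT.1 i]; exact finrank_top k (V i)
      have e2 : ∀ i : {i : Q0 // θ i ≤ 0}, finrank k (W i) = finrank k (V i.1) := fun i => by
        rw [hT.2 i, finrank_top k (E i)]; exact hE i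
      simp [e1, e2, hθ]
    · exact le_of_lt (h U W hU hW h0 hT)
  constructor
  · exact ⟨fun h => ⟨mss h, bij_of_mss h⟩, fun ⟨h1, h2⟩ => ss_back h1 h2⟩
  constructor
  · -- θ⁻-stable → stable ∧ bijective
    intro h
    have hss := stable_to_ss h
    have hbij := bij_of_mss hss
    refine ⟨⟨mss hss, fun U hU hne0 hneT => ?_⟩, hbij⟩
    have hval := h U (fun i => (U i.1).map (B i)) hU
      (fun i x hx => Submodule.mem_map_of_mem hx)
      (fun hc => hne0 hc.1) (fun hc => hneT hc.1)
    rw [thetaMinusVal_eq] at hval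
    rw [Finset.sum_eq_zero (fun (i : {i : Q0 // θ i ≤ 0}) _ => by
      rw [hmapdim (fun j => (hbij j).1) U i]; ring)] at hval
    simpa using hval
  · -- converse for stability
    rintro ⟨hM, hB⟩ U W hU hW hne0 hneT
    rw [thetaMinusVal_eq]
    have hterm : ∀ i : {i : Q0 // θ i ≤ 0},
        ((finrank k (U i.1) : ℤ) - (finrank k (W i) : ℤ)) ≤ 0 := by
      intro i
      have hle : (U i.1).map (B i) ≤ W i :=
        Submodule.map_le_iff_le_comap.mpr (fun x hx => hW i x hx)
      have h2 := Submodule.finrank_mono hle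
      rw [hmapdim (fun j => (hB j).1) U i] at h2
      exact sub_nonpos.mpr (by exact_mod_cast h2)
    by_cases hall : ∀ i : {i : Q0 // θ i ≤ 0}, (finrank k (W i) : ℤ) ≤ (finrank k (U i.1) : ℤ)
    · have hWeq : ∀ i : {i : Q0 // θ i ≤ 0}, W i = (U i.1).map (B i) := by
        intro i
        have hle : (U i.1).map (B i) ≤ W i :=
          Submodule.map_le_iff_le_comap.mpr (fun x hx => hW i x hx)
        refine (Submodule.eq_of_le_of_finrank_le hle ?_).symm
        rw [hmapdim (fun j => (hB j).1) U i]
        exact_mod_cast hall i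
      have hS0 : (∑ i : {i : Q0 // θ i ≤ 0},
          ((finrank k (U i.1) : ℤ) - (finrank k (W i) : ℤ))) = 0 :=
        Finset.sum_eq_zero fun i _ => by linarith [hterm i, hall i]
      rw [hS0, mul_zero, add_zero]
      refine hM.2 U hU ?_ ?_
      · intro hUbot
        exact hne0 ⟨hUbot, fun i => by rw [hWeq i, hUbot i.1, Submodule.map_bot]⟩
      · intro hUtop
        exact hneT ⟨hUtop, fun i => by
          rw [hWeq i, hUtop i.1, Submodule.map_top, LinearMap.range_eq_top.mpr (hB i).2]⟩
    · push_neg at hall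
      obtain ⟨j, hj⟩ := hall
      have hSle : (∑ i : {i : Q0 // θ i ≤ 0},
          ((finrank k (U i.1) : ℤ) - (finrank k (W i) : ℤ))) ≤ -1 := by
        calc (∑ i : {i : Q0 // θ i ≤ 0},
              ((finrank k (U i.1) : ℤ) - (finrank k (W i) : ℤ)))
            ≤ ∑ i : {i : Q0 // θ i ≤ 0}, (if i = j then (-1:ℤ) else 0) := by
              refine Finset.sum_le_sum fun i _ => ?_
              by_cases hij : i = j
              · subst hij; simp; linarith
              · simp [hij]; linarith [hterm i]
          _ = -1 := by simp
      have hθU := theta_sum_le V θ U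
      have hmul : (N:ℤ) * (∑ i : {i : Q0 // θ i ≤ 0},
          ((finrank k (U i.1) : ℤ) - (finrank k (W i) : ℤ))) ≤ (N:ℤ) * (-1) :=
        mul_le_mul_of_nonneg_left hSle hN0
      rw [← hCdef] at hθU
      linarith
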